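/- Under the same assumptions (𝐋 = [[z − S, α],[β, z^{-1} − S]] invertible with decaying Green's function G), one has tr G(n+1,n) = −1 for all n, i.e., G₁₁(n+1,n) + G₂₂(n+1,n) = −1. -/

import Mathlib

/-!
Write `G(n,m)` for the `2 × 2` Green's matrix and `U_n = [[z, α_n], [β_n, z⁻¹]]`, so that
`det U_n = 1 - α_n β_n`. The identities `𝐋G = I` and `G𝐋 = I` read
`G(n+1,m) = U_n G(n,m) - δ_{nm}` and `G(n,m-1) = G(n,m) U_m - δ_{nm}`, hence
`tr G(n+1,n) = tr (G(n+1,n+1) U_{n+1}) - 2 = tr (U_{n+1} G(n+1,n+1)) - 2 = tr G(n+2,n+1)`,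
and the trace does not depend on `n`.

Off the diagonal `det G(n+1,m) = (1 - α_n β_n) det G(n,m)`, and `α_n β_n` is summable, so the
partial products of `∏ (1 - α_j β_j)` converge. Sending `n → -∞` in
`det G(m,m) = ∏_{n ≤ j < m} (1 - α_j β_j) · det G(n,m)` gives `det G(m,m) = 0`; sending `n → +∞` in
`det G(n,b) = ∏_{b < j < n} (1 - α_j β_j) · det G(b+1,b)`, with `b` past the finitely many vanishing
factors so that the infinite product is nonzero, gives `det G(b+1,b) = 0`. Since
`det (A - 1) = det A - tr A + 1` for `2 × 2` matrices, `G(b+1,b) = U_b G(b,b) - 1` then yields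
`tr G(b+1,b) = -1`.
-/

open Filter Topology Finset Matrix

section ProdRecurrence

variable {M : Type*} [CommMonoid M] {c d : ℕ → M}

theorem eq_prod_range_mul_of_succ (h : ∀ n, d (n + 1) = c n * d n) (N : ℕ) :
    d N = (∏ n ∈ range N, c n) * d 0 := by
  induction N with
  | zero => simp
  | succ N ih => rw [h, ih, prod_range_succ, mul_assoc, mul_left_comm, ← mul_assoc]

theorem eq_prod_range_mul_of_pred (h : ∀ n, d n = c n * d (n + 1)) (N : ℕ) :
    d 0 = (∏ n ∈ range N, c n) * d N := by
  induction N with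
  | zero => simp
  | succ N ih => rw [ih, h N, prod_range_succ, mul_assoc]

end ProdRecurrence

section OneSubProduct

variable {R : Type*} [NormedCommRing R] [NormOneClass R] [CompleteSpace R]

theorem tendsto_prod_range_one_sub {x : ℕ → R} (hx : Summable (‖x ·‖)) :
    Tendsto (fun N ↦ ∏ n ∈ range N, (1 - x n)) atTop (𝓝 (∏' n, (1 - x n))) := by
  have : Multipliable fun n ↦ 1 + -x n := multipliable_one_add_of_summable (by simpa using hx)
  simpa [sub_eq_add_neg] using this.hasProd.tendsto_prod_nat

theorem eq_zero_of_eq_one_sub_mul_succ {x d : ℕ → R} (hx : Summable (‖x ·‖))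
    (hd : ∀ n, d n = (1 - x n) * d (n + 1)) (hlim : Tendsto d atTop (𝓝 0)) : d 0 = 0 := by
  have h := (tendsto_prod_range_one_sub hx).mul hlim
  rw [mul_zero] at h
  exact tendsto_nhds_unique (tendsto_const_nhds.congr (eq_prod_range_mul_of_pred hd)) h

end OneSubProduct

theorem eq_zero_of_succ_eq_one_sub_mul {𝕜 : Type*} [NormedField 𝕜] [CompleteSpace 𝕜]
    {x d : ℕ → 𝕜} (hx : Summable (‖x ·‖)) (hx1 : ∀ n, x n ≠ 1)
    (hd : ∀ n, d (n + 1) = (1 - x n) * d n) (hlim : Tendsto d atTop (𝓝 0)) : d 0 = 0 := by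
  have hprod : ∏' n, (1 - x n) ≠ 0 := by
    simpa [sub_eq_add_neg] using tprod_one_add_ne_zero_of_summable (f := (-x ·))
      (fun n ↦ by simpa [← sub_eq_add_neg, sub_eq_zero] using (hx1 n).symm) (by simpa using hx)
  have h := (tendsto_prod_range_one_sub hx).mul_const (d 0)
  have : (∏' n, (1 - x n)) * d 0 = 0 :=
    tendsto_nhds_unique (h.congr fun N ↦ (eq_prod_range_mul_of_succ hd N).symm) hlim
  exact (mul_eq_zero.mp this).resolve_left hprod

section GreenMatrix

variable {K : Type*} [CommRing K] {G : ℤ → ℤ → Matrix (Fin 2) (Fin 2) K}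
  {U : ℤ → Matrix (Fin 2) (Fin 2) K}

theorem Matrix.det_fin_two_sub_one (A : Matrix (Fin 2) (Fin 2) K) :
    (A - 1).det = A.det - A.trace + 1 := by
  simp only [det_fin_two, trace_fin_two, sub_apply, one_apply_eq, one_apply_ne, ne_eq, zero_ne_one,
    one_ne_zero, not_false_eq_true, sub_zero]
  ring

theorem det_succ_left_of_ne
    (hcol : ∀ a b, G (a + 1) b = U a * G a b - if a = b then 1 else 0) {a b : ℤ} (hab : a ≠ b) :
    (G (a + 1) b).det = (U a).det * (G a b).det := by
  rw [hcol, if_neg hab, sub_zero, det_mul]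

theorem trace_add_det_subdiag
    (hcol : ∀ a b, G (a + 1) b = U a * G a b - if a = b then 1 else 0) {n : ℤ}
    (hdiag : (G n n).det = 0) :
    (G (n + 1) n).trace + (G (n + 1) n).det = -1 := by
  rw [hcol, if_pos rfl, det_fin_two_sub_one, det_mul, hdiag, trace_sub, trace_one]
  simp only [Fintype.card_fin, Nat.cast_ofNat]
  ring

theorem periodic_trace_subdiag
    (hcol : ∀ a b, G (a + 1) b = U a * G a b - if a = b then 1 else 0)
    (hrow : ∀ a b, G a (b - 1) = G a b * U b - if a = b then 1 else 0) :
    Function.Periodic (fun n ↦ (G (n + 1) n).trace) 1 := by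
  intro n
  have h1 := hcol (n + 1) (n + 1)
  have h2 := hrow (n + 1) (n + 1)
  rw [if_pos rfl] at h1 h2
  rw [add_sub_cancel_right] at h2
  simp only [h1, h2, trace_sub, trace_mul_comm (U _)]

theorem trace_subdiag_eq_neg_one
    (hcol : ∀ a b, G (a + 1) b = U a * G a b - if a = b then 1 else 0)
    (hrow : ∀ a b, G a (b - 1) = G a b * U b - if a = b then 1 else 0)
    (hdiag : ∀ n, (G n n).det = 0) (hsub : ∃ b, (G (b + 1) b).det = 0) (n : ℤ) :
    (G (n + 1) n).trace = -1 := by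
  obtain ⟨b, hb⟩ := hsub
  have hper := periodic_trace_subdiag hcol hrow
  have hn := hper.int_mul_eq n
  have hb' := hper.int_mul_eq b
  simp only [Int.cast_id, mul_one] at hn hb'
  rw [hn, ← hb']
  simpa [hb] using trace_add_det_subdiag hcol (hdiag b)

end GreenMatrix

section Decay

variable {𝕜 : Type*} [NormedField 𝕜] [CompleteSpace 𝕜] {G : ℤ → ℤ → Matrix (Fin 2) (Fin 2) 𝕜}
  {U : ℤ → Matrix (Fin 2) (Fin 2) 𝕜} {x : ℤ → 𝕜}

theorem det_diag_eq_zero_of_tendsto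
    (hcol : ∀ a b, G (a + 1) b = U a * G a b - if a = b then 1 else 0)
    (hU : ∀ a, (U a).det = 1 - x a) (hx : Summable (‖x ·‖))
    (hdecay : ∀ m, Tendsto (fun n ↦ (G n m).det) cofinite (𝓝 0)) (b : ℤ) :
    (G b b).det = 0 := by
  have hinj : Function.Injective fun n : ℕ ↦ b - n - 1 := fun m n h ↦ by simp only at h; omega
  have := eq_zero_of_eq_one_sub_mul_succ (x := fun n : ℕ ↦ x (b - n - 1))
    (d := fun N : ℕ ↦ (G (b - N) b).det) (hx.comp_injective hinj) (fun n ↦ ?_) ?_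
  · simpa using this
  · have h := det_succ_left_of_ne hcol (by omega : b - n - 1 ≠ b)
    rw [hU, sub_add_cancel] at h
    rw [Nat.cast_succ, ← sub_sub, h]
  · refine (hdecay b).comp (Nat.cofinite_eq_atTop ▸ Function.Injective.tendsto_cofinite ?_)
    exact fun m n h ↦ by omega

theorem exists_det_subdiag_eq_zero_of_tendsto
    (hcol : ∀ a b, G (a + 1) b = U a * G a b - if a = b then 1 else 0)
    (hU : ∀ a, (U a).det = 1 - x a) (hx : Summable (‖x ·‖))
    (hdecay : ∀ m, Tendsto (fun n ↦ (G n m).det) cofinite (𝓝 0)) :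
    ∃ b, (G (b + 1) b).det = 0 := by
  obtain ⟨b, hb⟩ : ∃ b, ∀ j ≥ b, x j ≠ 1 := by
    have hx0 : Tendsto x atTop (𝓝 0) :=
      (hx.of_norm.tendsto_cofinite_zero).mono_left (Int.cofinite_eq ▸ le_sup_right)
    exact eventually_atTop.mp (hx0.eventually_ne one_ne_zero.symm)
  have hinj : Function.Injective fun n : ℕ ↦ b + 1 + n := fun m n h ↦ by simp only at h; omega
  refine ⟨b, ?_⟩
  have := eq_zero_of_succ_eq_one_sub_mul (x := fun n : ℕ ↦ x (b + 1 + n))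
    (d := fun N : ℕ ↦ (G (b + 1 + N) b).det) (hx.comp_injective hinj) (fun n ↦ hb _ (by omega))
    (fun n ↦ ?_) ?_
  · simpa using this
  · have h := det_succ_left_of_ne hcol (by omega : b + 1 + (n : ℤ) ≠ b)
    rw [hU] at h
    rw [Nat.cast_succ, ← add_assoc, h]
  · exact (hdecay b).comp (Nat.cofinite_eq_atTop ▸ hinj.tendsto_cofinite)

end Decay

section AblowitzLadik

local notation "ℓ²" => lp (fun _ : ℤ => ℂ) 2

def alTransferMatrix {K : Type*} [Field K] (z : K) (α β : ℤ → K) (n : ℤ) :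
    Matrix (Fin 2) (Fin 2) K :=
  !![z, α n; β n, z⁻¹]

theorem det_alTransferMatrix {K : Type*} [Field K] {z : K} (hz : z ≠ 0) (α β : ℤ → K) (n : ℤ) :
    (alTransferMatrix z α β n).det = 1 - α n * β n := by
  simp [alTransferMatrix, det_fin_two, hz]

/-- `L` acts as `𝐋 = [[z - S, α], [β, z⁻¹ - S]]`, where `(S f) n = f (n + 1)`. -/
def IsALOperator (z : ℂ) (α β : ℤ → ℂ) (L : ℓ² × ℓ² →L[ℂ] ℓ² × ℓ²) : Prop :=
  ∀ f n, (L f).1 n = z * f.1 n - f.1 (n + 1) + α n * f.2 n ∧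
    (L f).2 n = β n * f.1 n + z⁻¹ * f.2 n - f.2 (n + 1)

noncomputable def alGreenMatrix (R : ℓ² × ℓ² →L[ℂ] ℓ² × ℓ²) (n m : ℤ) :
    Matrix (Fin 2) (Fin 2) ℂ :=
  !![(R (lp.single 2 m 1, 0)).1 n, (R (0, lp.single 2 m 1)).1 n;
    (R (lp.single 2 m 1, 0)).2 n, (R (0, lp.single 2 m 1)).2 n]

theorem lp.sub_apply {α E : Type*} [NormedAddCommGroup E] {p : ENNReal}
    (f g : lp (fun _ : α ↦ E) p) (i : α) : (f - g) i = f i - g i :=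
  rfl

variable {z : ℂ} {α β : ℤ → ℂ} {L R : ℓ² × ℓ² →L[ℂ] ℓ² × ℓ²}

theorem IsALOperator.apply_right_inverse (hL : IsALOperator z α β L) (hLR : L * R = 1)
    (f : ℓ² × ℓ²) (n : ℤ) :
    (R f).1 (n + 1) = z * (R f).1 n + α n * (R f).2 n - f.1 n ∧
      (R f).2 (n + 1) = β n * (R f).1 n + z⁻¹ * (R f).2 n - f.2 n := by
  have hf : L (R f) = f := DFunLike.congr_fun hLR f
  obtain ⟨h1, h2⟩ := hL (R f) n
  rw [hf] at h1 h2
  exact ⟨by linear_combination h1, by linear_combination h2⟩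

theorem IsALOperator.apply_single_fst (hL : IsALOperator z α β L) (k : ℤ) :
    L (lp.single 2 k 1, 0) =
      z • (lp.single 2 k 1, 0) + β k • (0, lp.single 2 k 1) - (lp.single 2 (k - 1) 1, 0) := by
  refine Prod.ext (lp.ext (funext fun n ↦ ?_)) (lp.ext (funext fun n ↦ ?_))
  all_goals simp +contextual [hL _ n, Pi.single_apply, eq_sub_iff_add_eq, lp.sub_apply,
    -lp.coeFn_sub]

theorem IsALOperator.apply_single_snd (hL : IsALOperator z α β L) (k : ℤ) :
    L (0, lp.single 2 k 1) =
      α k • (lp.single 2 k 1, 0) + z⁻¹ • (0, lp.single 2 k 1) - (0, lp.single 2 (k - 1) 1) := by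
  refine Prod.ext (lp.ext (funext fun n ↦ ?_)) (lp.ext (funext fun n ↦ ?_))
  all_goals simp +contextual [hL _ n, Pi.single_apply, eq_sub_iff_add_eq, lp.sub_apply,
    -lp.coeFn_sub]

theorem alGreenMatrix_succ_left (hL : IsALOperator z α β L) (hLR : L * R = 1) (a b : ℤ) :
    alGreenMatrix R (a + 1) b = alTransferMatrix z α β a * alGreenMatrix R a b -
      if a = b then 1 else 0 := by
  have h := hL.apply_right_inverse hLR
  by_cases hab : a = b <;> ext i j <;> fin_cases i <;> fin_cases j <;>
    simp [alGreenMatrix, alTransferMatrix, h, hab]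

theorem alGreenMatrix_pred_right (hL : IsALOperator z α β L) (hRL : R * L = 1) (a b : ℤ) :
    alGreenMatrix R a (b - 1) = alGreenMatrix R a b * alTransferMatrix z α β b -
      if a = b then 1 else 0 := by
  have hinv : ∀ f, R (L f) = f := DFunLike.congr_fun hRL
  have h1 := hinv (lp.single 2 b 1, 0)
  have h2 := hinv (0, lp.single 2 b 1)
  rw [hL.apply_single_fst, map_sub, map_add, map_smul, map_smul] at h1
  rw [hL.apply_single_snd, map_sub, map_add, map_smul, map_smul] at h2
  have hcol1 := eq_sub_of_add_eq' (sub_eq_iff_eq_add.mp h1).symm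
  have hcol2 := eq_sub_of_add_eq' (sub_eq_iff_eq_add.mp h2).symm
  by_cases hab : a = b <;> ext i j <;> fin_cases i <;> fin_cases j <;>
    simp only [alGreenMatrix, hcol1, hcol2, Prod.fst_add, Prod.fst_sub, Prod.snd_add, Prod.snd_sub,
      Prod.smul_fst, Prod.smul_snd, lp.coeFn_add, lp.coeFn_sub, lp.coeFn_smul, Pi.add_apply,
      Pi.sub_apply, Pi.smul_apply, smul_eq_mul, lp.single_apply, Pi.single_apply, lp.coeFn_zero,
      Pi.zero_apply] <;>
    simp [alTransferMatrix, mul_comm, hab]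

end AblowitzLadik

/-- For the Ablowitz–Ladik Lax operator `𝐋 = [[z − S, α],[β, z⁻¹ − S]]` on
`ℓ²(ℤ) ⊕ ℓ²(ℤ)` with `|z| ≥ 2` and `α, β ∈ ℓ²`, invertible with matrix-valued Green's
function `G(n,m)` decaying as `n → ±∞`, one has `tr G(n+1,n) = −1` for all `n`. -/
theorem AL_greens_function_trace_identity (z : ℂ) (hz : 2 ≤ ‖z‖)
    (α β : lp (fun _ : ℤ => ℂ) 2)
    (bL bR : (lp (fun _ : ℤ => ℂ) 2 × lp (fun _ : ℤ => ℂ) 2) →L[ℂ]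
      (lp (fun _ : ℤ => ℂ) 2 × lp (fun _ : ℤ => ℂ) 2))
    (hL : ∀ (f : lp (fun _ : ℤ => ℂ) 2 × lp (fun _ : ℤ => ℂ) 2) (n : ℤ),
      (bL f).1 n = z * f.1 n - f.1 (n + 1) + α n * f.2 n ∧
      (bL f).2 n = β n * f.1 n + z⁻¹ * f.2 n - f.2 (n + 1))
    (hR1 : bR * bL = 1) (hR2 : bL * bR = 1)
    (G11 G12 G21 G22 : ℤ → ℤ → ℂ)
    (hG11 : ∀ n m : ℤ, G11 n m = (bR (lp.single 2 m 1, 0)).1 n)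
    (hG21 : ∀ n m : ℤ, G21 n m = (bR (lp.single 2 m 1, 0)).2 n)
    (hG12 : ∀ n m : ℤ, G12 n m = (bR (0, lp.single 2 m 1)).1 n)
    (hG22 : ∀ n m : ℤ, G22 n m = (bR (0, lp.single 2 m 1)).2 n)
    (hdecay11 : ∀ m : ℤ, Filter.Tendsto (fun n => G11 n m) Filter.cofinite (nhds 0))
    (hdecay12 : ∀ m : ℤ, Filter.Tendsto (fun n => G12 n m) Filter.cofinite (nhds 0))
    (hdecay21 : ∀ m : ℤ, Filter.Tendsto (fun n => G21 n m) Filter.cofinite (nhds 0))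
    (hdecay22 : ∀ m : ℤ, Filter.Tendsto (fun n => G22 n m) Filter.cofinite (nhds 0)) :
    ∀ n : ℤ, G11 (n + 1) n + G22 (n + 1) n = -1 := by
  have hz0 : z ≠ 0 := by rintro rfl; norm_num at hz
  have hcol := alGreenMatrix_succ_left (α := α) (β := β) hL hR2
  have hrow := alGreenMatrix_pred_right (α := α) (β := β) hL hR1
  have hx : Summable fun n ↦ ‖α n * β n‖ := by
    simpa [norm_mul] using lp.summable_mul (by simpa using Real.HolderConjugate.two_two) α β
  have hdecay (m : ℤ) : Tendsto (fun n ↦ (alGreenMatrix bR n m).det) cofinite (𝓝 0) := by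
    simpa [alGreenMatrix, det_fin_two, ← hG11, ← hG12, ← hG21, ← hG22] using
      ((hdecay11 m).mul (hdecay22 m)).sub ((hdecay12 m).mul (hdecay21 m))
  have hU := det_alTransferMatrix hz0 α β
  intro n
  simpa [alGreenMatrix, trace_fin_two, ← hG11, ← hG22] using
    trace_subdiag_eq_neg_one hcol hrow (det_diag_eq_zero_of_tendsto hcol hU hx hdecay)
      (exists_det_subdiag_eq_zero_of_tendsto hcol hU hx hdecay) n
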